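/- arXiv:2404.06145 — 5 statements merged into one kernel-verified Lean document; each statement's English description precedes it below -/
import Mathlib

section
/- Let ψ(s) = γs + (σ²/2)s² + ∫_{(0,∞)} (e^{−sz} − 1 + sz·1_{z≤1}) ν(dz) be the Laplace exponent of a spectrally positive Lévy process, and suppose there is p ∈ (0,∞) with ψ(p) = 0, ψ(s) < 0 for s ∈ (0,p), and ψ(s) > 0 for s > p. Let c ∈ ℝ and let κ : [0,∞) → [0,∞) be measurable and bounded, and suppose that ∫_0^∞ e^{−sy} κ(y) dy = c/(s−p) − 1/ψ(s) for every s > p. Then the same identity ∫_0^∞ e^{−sy} κ(y) dy = c/(s−p) − 1/ψ(s) holds for every s ∈ (0,p), and consequently (−ψ(s)) · ∫_0^∞ e^{−sy} κ(y) dy → 1 as s → 0+, i.e. ∫_0^∞ e^{−sy} κ(y) dy ∼ −1/ψ(s) as s → 0+. -/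
/-!
Clearing denominators, the hypothesis reads `(s - p) ψ(s) L(s) = c ψ(s) - (s - p)` for `s > p`,
where `L` is the Laplace transform of `κ`. Both sides extend holomorphically to `re z > 0`: `L`
because `κ` is bounded, and `ψ` because the Lévy–Khintchine integrand is dominated by
`C · min 1 (u ^ 2)` locally uniformly in `z`. By the identity theorem the relation persists on
`(0, p)`, where `ψ ≠ 0` and it can be solved for `L(s)` again. Dominated convergence gives
`ψ(s) → 0` as `s → 0+`, so `-ψ(s) L(s) = 1 - c ψ(s) / (s - p) → 1`.
-/

open MeasureTheory Filter Set Topology Metric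

theorem differentiableAt_integral_of_dominated_loc {α E : Type*} [MeasurableSpace α]
    {μ : Measure α} [NormedAddCommGroup E] [NormedSpace ℂ E] [CompleteSpace E]
    {F : ℂ → α → E} {z₀ : ℂ} {r : ℝ} (hr : 0 < r) {bound : α → ℝ}
    (hF_meas : ∀ z, AEStronglyMeasurable (F z) μ)
    (hF_diff : ∀ᵐ u ∂μ, DifferentiableOn ℂ (F · u) (ball z₀ r))
    (h_bound : ∀ᵐ u ∂μ, ∀ z ∈ ball z₀ r, ‖F z u‖ ≤ bound u)
    (bound_integrable : Integrable bound μ) :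
    DifferentiableAt ℂ (fun z ↦ ∫ u, F z u ∂μ) z₀ := by
  have hF'_meas : AEStronglyMeasurable (fun u ↦ deriv (F · u) z₀) μ := by
    refine aestronglyMeasurable_of_tendsto_ae (𝓝[≠] z₀)
      (fun z ↦ ((hF_meas z).sub (hF_meas z₀)).const_smul (z - z₀)⁻¹) ?_
    filter_upwards [hF_diff] with u hu
    exact ((hu z₀ (mem_ball_self hr)).differentiableAt
      (isOpen_ball.mem_nhds (mem_ball_self hr))).hasDerivAt.tendsto_slope
  -- Cauchy's estimate on circles of radius `r / 2` bounds the derivative by the integrand itself.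
  have h_deriv_bound :
      ∀ᵐ u ∂μ, ∀ z ∈ ball z₀ (r / 2), ‖deriv (F · u) z‖ ≤ bound u / (r / 2) := by
    filter_upwards [hF_diff, h_bound] with u hu hub z hz
    have hsub : closedBall z (r / 2) ⊆ ball z₀ r := by
      intro w hw
      rw [mem_ball] at hz ⊢
      rw [mem_closedBall] at hw
      linarith [dist_triangle w z z₀]
    exact Complex.norm_deriv_le_of_forall_mem_sphere_norm_le (half_pos hr)
      (hu.diffContOnCl_ball hsub) fun w hw ↦ hub w (hsub (sphere_subset_closedBall hw))
  refine (hasDerivAt_integral_of_dominated_loc_of_deriv_le (ball_mem_nhds z₀ (half_pos hr))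
    (Eventually.of_forall hF_meas) ?_ hF'_meas h_deriv_bound
    (bound_integrable.div_const _) ?_).2.differentiableAt
  · exact bound_integrable.mono' (hF_meas z₀) (h_bound.mono fun u hu ↦ hu z₀ (mem_ball_self hr))
  · filter_upwards [hF_diff] with u hu z hz
    have hz' := ball_subset_ball (half_le_self hr.le) hz
    exact ((hu z hz').differentiableAt (isOpen_ball.mem_nhds hz')).hasDerivAt

lemma eqOn_re_pos_of_eq_on_Ioi {f g : ℂ → ℂ} (hf : DifferentiableOn ℂ f {z | 0 < z.re})
    (hg : DifferentiableOn ℂ g {z | 0 < z.re}) {p : ℝ} (hp : 0 ≤ p)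
    (hfg : ∀ t : ℝ, p < t → f t = g t) : EqOn f g {z | 0 < z.re} := by
  have hU : IsOpen {z : ℂ | 0 < z.re} := isOpen_lt continuous_const Complex.continuous_re
  refine (hf.analyticOnNhd hU).eqOn_of_preconnected_of_frequently_eq (hg.analyticOnNhd hU)
    (convex_halfSpace_re_gt 0).isPreconnected (z₀ := ((p + 1 : ℝ) : ℂ))
    (by simp only [mem_ofPred_eq, Complex.ofReal_re]; linarith) ?_
  have h_ofReal : Tendsto (fun t : ℝ ↦ (t : ℂ)) (𝓝[≠] (p + 1)) (𝓝[≠] ((p + 1 : ℝ) : ℂ)) :=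
    Complex.continuous_ofReal.continuousWithinAt.tendsto_nhdsWithin
      fun _ h h' ↦ h (Complex.ofReal_injective h')
  refine h_ofReal.frequently (Eventually.frequently ?_)
  filter_upwards [nhdsWithin_le_nhds (eventually_gt_nhds (by linarith : p < p + 1))] with t ht
  exact hfg t ht

lemma re_sub_lt_re_of_mem_ball {z z₀ : ℂ} {r : ℝ} (hz : z ∈ ball z₀ r) : z₀.re - r < z.re := by
  rw [mem_ball, Complex.dist_eq] at hz
  have := Complex.abs_re_le_norm (z - z₀)
  rw [Complex.sub_re] at this
  linarith [abs_le.1 this]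

noncomputable def levyKernel (z : ℂ) (u : ℝ) : ℂ :=
  Complex.exp (-(z * u)) - 1 + z * u * (if u ≤ 1 then 1 else 0)

lemma levyKernel_ofReal (s u : ℝ) :
    levyKernel s u = ((Real.exp (-(s * u)) - 1 + s * u * (if u ≤ 1 then 1 else 0) : ℝ) : ℂ) := by
  split_ifs <;> simp [levyKernel, *]

lemma measurable_levyKernel (z : ℂ) : Measurable (levyKernel z) :=
  (by fun_prop : Measurable fun u : ℝ ↦ Complex.exp (-(z * u)) - 1).add
    ((by fun_prop : Measurable fun u : ℝ ↦ z * u).mul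
      (Measurable.ite measurableSet_Iic measurable_const measurable_const))

lemma differentiable_levyKernel (u : ℝ) : Differentiable ℂ (levyKernel · u) := by
  unfold levyKernel
  fun_prop

lemma norm_levyKernel_le {z : ℂ} {u R : ℝ} (hz : 0 ≤ z.re) (hzR : ‖z‖ ≤ R) (hu : 0 ≤ u) :
    ‖levyKernel z u‖ ≤ max (R ^ 2 * Real.exp R) 2 * min 1 (u ^ 2) := by
  have hR : 0 ≤ R := (norm_nonneg z).trans hzR
  rcases le_or_gt u 1 with hu1 | hu1
  · have key := Complex.norm_exp_sub_sum_le_norm_mul_exp (-(z * u)) 2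
    norm_num [Finset.sum_range_succ, abs_of_nonneg hu] at key
    have hzu : ‖z‖ * u ≤ R := (mul_le_mul hzR hu1 hu hR).trans_eq (mul_one R)
    calc ‖levyKernel z u‖ = ‖Complex.exp (-(z * u)) - (1 + -(z * u))‖ := by
          rw [levyKernel, if_pos hu1]; ring_nf
      _ ≤ (‖z‖ * u) ^ 2 * Real.exp (‖z‖ * u) := key
      _ = ‖z‖ ^ 2 * Real.exp (‖z‖ * u) * u ^ 2 := by ring
      _ ≤ R ^ 2 * Real.exp R * u ^ 2 := by gcongr
      _ ≤ max (R ^ 2 * Real.exp R) 2 * min 1 (u ^ 2) := by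
          rw [min_eq_right (by nlinarith)]
          gcongr
          exact le_max_left _ _
  · have hexp : ‖Complex.exp (-(z * u))‖ ≤ 1 := by
      rw [Complex.norm_exp, Real.exp_le_one_iff]
      simpa [Complex.mul_re] using mul_nonneg hz hu
    calc ‖levyKernel z u‖ = ‖Complex.exp (-(z * u)) - 1‖ := by simp [levyKernel, hu1.not_ge]
      _ ≤ 1 + 1 := (norm_sub_le _ _).trans (by simpa using hexp)
      _ ≤ max (R ^ 2 * Real.exp R) 2 * min 1 (u ^ 2) := by
          rw [min_eq_left (by nlinarith)]
          norm_num

lemma integrable_min_one_sq {ν : Measure ℝ}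
    (hν : ∫⁻ u in Ioi 0, ENNReal.ofReal (min 1 (u ^ 2)) ∂ν < ⊤) :
    Integrable (fun u ↦ min 1 (u ^ 2)) (ν.restrict (Ioi 0)) :=
  ⟨by fun_prop, (hasFiniteIntegral_iff_ofReal (ae_of_all _ fun u ↦ by positivity)).2 hν⟩

noncomputable def laplaceExponent (b σ : ℝ) (ν : Measure ℝ) (z : ℂ) : ℂ :=
  b * z + σ ^ 2 / 2 * z ^ 2 + ∫ u in Ioi 0, levyKernel z u ∂ν

lemma laplaceExponent_ofReal (b σ : ℝ) (ν : Measure ℝ) (s : ℝ) :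
    laplaceExponent b σ ν s = ((b * s + σ ^ 2 / 2 * s ^ 2 +
      ∫ u in Ioi 0, (Real.exp (-(s * u)) - 1 + s * u * (if u ≤ 1 then 1 else 0)) ∂ν : ℝ) : ℂ) := by
  simp only [laplaceExponent, levyKernel_ofReal, integral_complex_ofReal]
  push_cast
  rfl

lemma differentiableOn_laplaceExponent (b σ : ℝ) {ν : Measure ℝ}
    (hν : ∫⁻ u in Ioi 0, ENNReal.ofReal (min 1 (u ^ 2)) ∂ν < ⊤) :
    DifferentiableOn ℂ (laplaceExponent b σ ν) {z | 0 < z.re} := by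
  intro z₀ hz₀
  set R := ‖z₀‖ + z₀.re
  have h_int : DifferentiableAt ℂ (fun z ↦ ∫ u in Ioi 0, levyKernel z u ∂ν) z₀ := by
    refine differentiableAt_integral_of_dominated_loc hz₀
      (fun z ↦ (measurable_levyKernel z).aestronglyMeasurable)
      (ae_of_all _ fun u ↦ (differentiable_levyKernel u).differentiableOn)
      ?_ ((integrable_min_one_sq hν).const_mul (max (R ^ 2 * Real.exp R) 2))
    filter_upwards [ae_restrict_mem measurableSet_Ioi] with u hu z hz
    refine norm_levyKernel_le (by linarith [re_sub_lt_re_of_mem_ball hz]) ?_ (le_of_lt hu)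
    rw [mem_ball, Complex.dist_eq] at hz
    linarith [norm_le_norm_add_norm_sub' z z₀]
  exact ((by fun_prop : DifferentiableAt ℂ (fun z : ℂ ↦ b * z + σ ^ 2 / 2 * z ^ 2) z₀).add
    h_int).differentiableWithinAt

lemma tendsto_laplaceExponent_nhdsGT_zero (b σ : ℝ) {ν : Measure ℝ}
    (hν : ∫⁻ u in Ioi 0, ENNReal.ofReal (min 1 (u ^ 2)) ∂ν < ⊤) :
    Tendsto (fun s : ℝ ↦ laplaceExponent b σ ν s) (𝓝[>] 0) (𝓝 0) := by
  have h_poly : Tendsto (fun s : ℝ ↦ (b * s + σ ^ 2 / 2 * s ^ 2 : ℂ)) (𝓝[>] 0) (𝓝 0) := by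
    simpa using ((by fun_prop : Continuous fun s : ℝ ↦ (b * s + σ ^ 2 / 2 * s ^ 2 : ℂ)).tendsto
      0).mono_left nhdsWithin_le_nhds
  have h_int : Tendsto (fun s : ℝ ↦ ∫ u in Ioi 0, levyKernel s u ∂ν) (𝓝[>] 0) (𝓝 0) := by
    refine integral_zero ℝ ℂ ▸ tendsto_integral_filter_of_dominated_convergence _
      (Eventually.of_forall fun s ↦ (measurable_levyKernel _).aestronglyMeasurable) ?_
      ((integrable_min_one_sq hν).const_mul (max (1 ^ 2 * Real.exp 1) 2))
      (ae_of_all _ fun u ↦ ?_)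
    · filter_upwards [Ioo_mem_nhdsGT one_pos] with s hs
      filter_upwards [ae_restrict_mem measurableSet_Ioi] with u hu
      exact norm_levyKernel_le (by simpa using hs.1.le)
        (by simpa [abs_of_pos hs.1] using hs.2.le) (le_of_lt hu)
    · have h : Tendsto (fun s : ℝ ↦ levyKernel s u) (𝓝 0) (𝓝 (levyKernel 0 u)) :=
        ((differentiable_levyKernel u).continuous.comp Complex.continuous_ofReal).tendsto 0
      simpa [levyKernel] using h.mono_left nhdsWithin_le_nhds
  have h := h_poly.add h_int
  rw [add_zero] at h
  exact h

noncomputable def laplaceTransform (κ : ℝ → ℝ) (z : ℂ) : ℂ :=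
  ∫ y in Ioi (0 : ℝ), Complex.exp (-(z * y)) * κ y

lemma laplaceTransform_ofReal (κ : ℝ → ℝ) (s : ℝ) :
    laplaceTransform κ s = ((∫ y in Ioi 0, Real.exp (-(s * y)) * κ y : ℝ) : ℂ) := by
  rw [laplaceTransform, ← integral_complex_ofReal]
  push_cast
  rfl

lemma differentiableOn_laplaceTransform {κ : ℝ → ℝ} (hκ : Measurable κ) {M : ℝ}
    (hM : ∀ y, 0 ≤ y → ‖κ y‖ ≤ M) :
    DifferentiableOn ℂ (laplaceTransform κ) {z | 0 < z.re} := by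
  intro z₀ hz₀
  have ha : 0 < z₀.re / 2 := half_pos hz₀
  refine (differentiableAt_integral_of_dominated_loc ha
    (fun z ↦ (by fun_prop : Measurable fun y : ℝ ↦
      Complex.exp (-(z * y)) * κ y).aestronglyMeasurable)
    (ae_of_all _ fun y ↦ (by fun_prop : Differentiable ℂ fun z : ℂ ↦
      Complex.exp (-(z * y)) * κ y).differentiableOn)
    ?_ ((exp_neg_integrableOn_Ioi 0 ha).const_mul M)).differentiableWithinAt
  filter_upwards [ae_restrict_mem measurableSet_Ioi] with y hy z hz
  have hre : z₀.re / 2 ≤ z.re := by linarith [re_sub_lt_re_of_mem_ball hz]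
  have hexp : (-(z * y)).re ≤ -(z₀.re / 2) * y := by
    simp only [Complex.neg_re, Complex.mul_re, Complex.ofReal_re, Complex.ofReal_im, mul_zero,
      sub_zero]
    nlinarith [mem_Ioi.1 hy]
  rw [norm_mul, Complex.norm_exp, Complex.norm_real, mul_comm M]
  gcongr
  exact hM y (le_of_lt hy)

lemma tendsto_neg_mul_of_eq_div_sub_inv {ψ L : ℝ → ℝ} {c p : ℝ} (hp : 0 < p)
    (hψ : Tendsto ψ (𝓝[>] 0) (𝓝 0)) (hψ_ne : ∀ s ∈ Ioo 0 p, ψ s ≠ 0)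
    (hL : ∀ s ∈ Ioo 0 p, L s = c / (s - p) - 1 / ψ s) :
    Tendsto (fun s ↦ -ψ s * L s) (𝓝[>] 0) (𝓝 1) := by
  have hcp : Tendsto (fun s ↦ c / (s - p)) (𝓝[>] 0) (𝓝 (c / (0 - p))) :=
    ((continuousAt_const.div (continuousAt_id.sub continuousAt_const)
      (by simpa using hp.ne')).tendsto).mono_left nhdsWithin_le_nhds
  refine (by simpa using (hψ.neg.mul hcp).add_const 1 :
    Tendsto (fun s ↦ -ψ s * (c / (s - p)) + 1) (𝓝[>] 0) (𝓝 1)).congr' ?_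
  filter_upwards [Ioo_mem_nhdsGT hp] with s hs
  have hψs := hψ_ne s hs
  have hsp : s - p ≠ 0 := sub_ne_zero.2 hs.2.ne
  rw [hL s hs]
  field_simp
  ring

lemma mul_mul_eq_sub_iff_eq_div_sub_div {x ψ L c : ℝ} (hx : x ≠ 0) (hψ : ψ ≠ 0) :
    x * ψ * L = c * ψ - x ↔ L = c / x - 1 / ψ := by
  rw [div_sub_div c 1 hx hψ, eq_div_iff (mul_ne_zero hx hψ)]
  constructor <;> intro h <;> linear_combination h

theorem stmt_3_general (b σ : ℝ) (ν : Measure ℝ)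
    (hν_int : ∫⁻ z in Ioi 0, ENNReal.ofReal (min 1 (z ^ 2)) ∂ν < ⊤)
    (ψ : ℝ → ℝ)
    (hψ : ∀ s, 0 ≤ s → ψ s = b * s + σ ^ 2 / 2 * s ^ 2 +
      ∫ z in Ioi 0, (Real.exp (-(s * z)) - 1 + s * z * (if z ≤ 1 then 1 else 0)) ∂ν)
    (p : ℝ) (hp : 0 < p)
    (hψ_neg : ∀ s ∈ Ioo 0 p, ψ s < 0) (hψ_pos : ∀ s, p < s → 0 < ψ s)
    (c : ℝ) (κ : ℝ → ℝ) (hκ_meas : Measurable κ)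
    (hκ_nonneg : ∀ y, 0 ≤ y → 0 ≤ κ y)
    (hκ_bdd : ∃ M : ℝ, ∀ y, 0 ≤ y → κ y ≤ M)
    (hid : ∀ s, p < s →
      ∫ y in Ioi 0, Real.exp (-(s * y)) * κ y = c / (s - p) - 1 / ψ s) :
    (∀ s ∈ Ioo 0 p,
      ∫ y in Ioi 0, Real.exp (-(s * y)) * κ y = c / (s - p) - 1 / ψ s) ∧
    Tendsto (fun s => -ψ s * ∫ y in Ioi 0, Real.exp (-(s * y)) * κ y)
      (𝓝[>] 0) (𝓝 1) := by
  obtain ⟨M, hM⟩ := hκ_bdd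
  have hψ_ofReal : ∀ s : ℝ, 0 ≤ s → laplaceExponent b σ ν s = ψ s := fun s hs ↦ by
    rw [laplaceExponent_ofReal, hψ s hs]
  have hΨ := differentiableOn_laplaceExponent b σ hν_int
  have hL := differentiableOn_laplaceTransform hκ_meas (M := M) fun y hy ↦ by
    rw [Real.norm_of_nonneg (hκ_nonneg y hy)]; exact hM y hy
  have h_ext : EqOn (fun z ↦ (z - p) * laplaceExponent b σ ν z * laplaceTransform κ z)
      (fun z ↦ c * laplaceExponent b σ ν z - (z - p)) {z | 0 < z.re} := by
    refine eqOn_re_pos_of_eq_on_Ioi (by fun_prop) (by fun_prop) hp.le fun t ht ↦ ?_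
    rw [hψ_ofReal t (hp.trans ht).le, laplaceTransform_ofReal]
    exact_mod_cast (mul_mul_eq_sub_iff_eq_div_sub_div (sub_ne_zero.2 ht.ne')
      (hψ_pos t ht).ne').2 (hid t ht)
  have h_small : ∀ s ∈ Ioo 0 p,
      ∫ y in Ioi 0, Real.exp (-(s * y)) * κ y = c / (s - p) - 1 / ψ s := by
    intro s hs
    have h := h_ext (show 0 < (s : ℂ).re from hs.1)
    simp only [hψ_ofReal s hs.1.le, laplaceTransform_ofReal] at h
    exact (mul_mul_eq_sub_iff_eq_div_sub_div (sub_ne_zero.2 hs.2.ne) (hψ_neg s hs).ne).1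
      (by exact_mod_cast h)
  have hψ0 : Tendsto ψ (𝓝[>] 0) (𝓝 0) := by
    refine tendsto_ofReal_iff.1 ((tendsto_laplaceExponent_nhdsGT_zero b σ hν_int).congr' ?_)
    filter_upwards [self_mem_nhdsWithin] with s hs
    exact hψ_ofReal s (le_of_lt hs)
  exact ⟨h_small, tendsto_neg_mul_of_eq_div_sub_inv hp hψ0 (fun s hs ↦ (hψ_neg s hs).ne) h_small⟩

/-- Let `ψ` be the Laplace exponent of a spectrally positive Lévy process with a
root `p ∈ (0,∞)` (negative on `(0,p)`, positive on `(p,∞)`). If a bounded nonnegative measurable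
`κ` satisfies `∫_0^∞ e^{-sy} κ(y) dy = c/(s-p) - 1/ψ(s)` for all `s > p`, then the same identity
holds for all `s ∈ (0,p)`, and `∫_0^∞ e^{-sy} κ(y) dy ∼ -1/ψ(s)` as `s → 0+`. -/
theorem stmt_3 (b σ : ℝ) (hσ : 0 ≤ σ) (ν : Measure ℝ)
    (hν_supp : ν (Iic 0) = 0)
    (hν_int : ∫⁻ z in Ioi 0, ENNReal.ofReal (min 1 (z ^ 2)) ∂ν < ⊤)
    (ψ : ℝ → ℝ)
    (hψ : ∀ s, 0 ≤ s → ψ s = b * s + σ ^ 2 / 2 * s ^ 2 +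
      ∫ z in Ioi 0, (Real.exp (-(s * z)) - 1 + s * z * (if z ≤ 1 then 1 else 0)) ∂ν)
    (p : ℝ) (hp : 0 < p) (hψp : ψ p = 0)
    (hψ_neg : ∀ s ∈ Ioo 0 p, ψ s < 0) (hψ_pos : ∀ s, p < s → 0 < ψ s)
    (c : ℝ) (κ : ℝ → ℝ) (hκ_meas : Measurable κ)
    (hκ_nonneg : ∀ y, 0 ≤ y → 0 ≤ κ y)
    (hκ_bdd : ∃ M : ℝ, ∀ y, 0 ≤ y → κ y ≤ M)
    (hid : ∀ s, p < s →
      ∫ y in Ioi 0, Real.exp (-(s * y)) * κ y = c / (s - p) - 1 / ψ s) :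
    (∀ s ∈ Ioo 0 p,
      ∫ y in Ioi 0, Real.exp (-(s * y)) * κ y = c / (s - p) - 1 / ψ s) ∧
    Tendsto (fun s => -ψ s * ∫ y in Ioi 0, Real.exp (-(s * y)) * κ y)
      (𝓝[>] 0) (𝓝 1) :=
  stmt_3_general b σ ν hν_int ψ hψ p hp hψ_neg hψ_pos c κ hκ_meas hκ_nonneg hκ_bdd hid
end

section
/- For every α ∈ (0,1) and every s > 0: (s / Γ(1−α)) ∫_0^∞ e^{−sz} (e^{z} − 1)^{−α} dz = Γ(s+α)/Γ(s). -/
/-!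
Substituting `t = e^{-z}` turns the integral into the Beta integral
`B(s + α, 1 - α) = Γ(s + α) Γ(1 - α) / Γ(s + 1)`, and `Γ(s + 1) = s Γ(s)`.
-/

open MeasureTheory Set

open Real in
theorem integral_Ioi_eq_integral_Ioo_inv_smul_comp_neg_log {E : Type*} [NormedAddCommGroup E]
    [NormedSpace ℝ E] (g : ℝ → E) :
    ∫ z in Ioi (0 : ℝ), g z = ∫ t in Ioo (0 : ℝ) 1, t⁻¹ • g (-log t) := by
  have himage : (fun t ↦ -log t) '' Ioo 0 1 = Ioi 0 := by
    ext z
    refine ⟨?_, fun hz ↦ ⟨exp (-z), ⟨exp_pos _, exp_lt_one_iff.2 (neg_lt_zero.2 hz)⟩, by simp⟩⟩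
    rintro ⟨t, ⟨ht0, ht1⟩, rfl⟩
    exact neg_pos.2 (log_neg ht0 ht1)
  have hderiv : ∀ t ∈ Ioo (0 : ℝ) 1, HasDerivWithinAt (fun t ↦ -log t) (-t⁻¹) (Ioo 0 1) t :=
    fun t ht ↦ (hasDerivAt_log ht.1.ne').neg.hasDerivWithinAt
  have hinj : InjOn (fun t ↦ -log t) (Ioo (0 : ℝ) 1) := fun a ha b hb hab ↦
    log_injOn_pos (Ioo_subset_Ioi_self ha) (Ioo_subset_Ioi_self hb) (neg_injective hab)
  rw [← himage, integral_image_eq_integral_abs_deriv_smul measurableSet_Ioo hderiv hinj]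
  refine setIntegral_congr_fun measurableSet_Ioo fun t ht ↦ ?_
  rw [abs_neg, abs_of_pos (inv_pos.2 ht.1)]

theorem integral_rpow_mul_one_sub_rpow_eq_beta {a b : ℝ} (ha : 0 < a) (hb : 0 < b) :
    ∫ t in Ioo (0 : ℝ) 1, t ^ (a - 1) * (1 - t) ^ (b - 1) = ProbabilityTheory.beta a b := by
  have hcomplex : Complex.betaIntegral a b =
      ((∫ t in Ioo (0 : ℝ) 1, t ^ (a - 1) * (1 - t) ^ (b - 1) : ℝ) : ℂ) := by
    rw [Complex.betaIntegral, ← integral_Ioc_eq_integral_Ioo,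
      ← intervalIntegral.integral_of_le zero_le_one, ← intervalIntegral.integral_ofReal]
    refine intervalIntegral.integral_congr fun t ht ↦ ?_
    rw [uIcc_of_le zero_le_one] at ht
    push_cast
    rw [Complex.ofReal_cpow ht.1, Complex.ofReal_cpow (sub_nonneg.2 ht.2)]
    norm_num
  rw [ProbabilityTheory.beta_eq_betaIntegralReal a b ha hb, hcomplex, Complex.ofReal_re]

theorem integral_exp_neg_mul_mul_exp_sub_one_rpow_neg (s α : ℝ) :
    ∫ z in Ioi (0 : ℝ), Real.exp (-(s * z)) * (Real.exp z - 1) ^ (-α) =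
      ∫ t in Ioo (0 : ℝ) 1, t ^ (s + α - 1) * (1 - t) ^ (-α) := by
  rw [integral_Ioi_eq_integral_Ioo_inv_smul_comp_neg_log]
  refine setIntegral_congr_fun measurableSet_Ioo fun t ⟨ht0, ht1⟩ ↦ ?_
  have hexp_mul : Real.exp (-(s * -Real.log t)) = t ^ s := by
    rw [Real.rpow_def_of_pos ht0, mul_neg, neg_neg, mul_comm]
  have hexp_sub : Real.exp (-Real.log t) - 1 = (1 - t) / t := by
    rw [Real.exp_neg, Real.exp_log ht0]
    field_simp
  have hpow : t ^ (s + α - 1) = t ^ s * t ^ α * t⁻¹ := by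
    rw [sub_eq_add_neg, Real.rpow_add ht0, Real.rpow_add ht0, Real.rpow_neg_one]
  rw [smul_eq_mul, hexp_mul, hexp_sub, Real.div_rpow (sub_pos.2 ht1).le ht0.le,
    Real.rpow_neg ht0.le α, div_inv_eq_mul, hpow]
  ring

/-- For every `α ∈ (0,1)` and every `s > 0`:
`(s/Γ(1-α)) ∫_0^∞ e^{-sz} (e^z - 1)^{-α} dz = Γ(s+α)/Γ(s)`. -/
theorem stmt_11 (α : ℝ) (hα : α ∈ Ioo (0 : ℝ) 1) (s : ℝ) (hs : 0 < s) :
    s / Real.Gamma (1 - α) *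
        ∫ z in Ioi (0 : ℝ), Real.exp (-(s * z)) * (Real.exp z - 1) ^ (-α) =
      Real.Gamma (s + α) / Real.Gamma s := by
  obtain ⟨hα0, hα1⟩ := hα
  have hbeta := integral_rpow_mul_one_sub_rpow_eq_beta (add_pos hs hα0) (sub_pos.2 hα1)
  rw [sub_sub_cancel_left, ProbabilityTheory.beta, add_add_sub_cancel,
    Real.Gamma_add_one hs.ne'] at hbeta
  rw [integral_exp_neg_mul_mul_exp_sub_one_rpow_neg, hbeta]
  have hΓ : Real.Gamma (1 - α) ≠ 0 := (Real.Gamma_pos_of_pos (sub_pos.2 hα1)).ne'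
  field_simp
end

section
/- Let α ∈ (0,1), δ > 0, c₀ > 0, set γ := 1/(1−α), Ψ(s) := c₀ Γ(s+α)/Γ(s), z₀ := (1−α) c₀^{γ} δ^{αγ} and K := (γ^{1−α}/(c₀ δ^{α}))^{γ}. Suppose b : (0,∞) → (0,∞) satisfies the recursion b(r) = (r/Ψ(rδ)) · b(r−1) for all r > 1 and the log-convexity inequality b(q) ≤ b(p)^{(q−r)/(p−r)} b(r)^{(p−q)/(p−r)} whenever p ≥ q ≥ r > 1. Then the sequence a_n := b(nγ) satisfies a_n/a_{n−1} ∼ K · n^{(1−α)γ} = K·n as n → ∞ (with K = 1/z₀), and consequently the power series Σ_{n≥0} a_n z^n / n! converges for 0 < z < z₀ and diverges for z > z₀. -/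
/-! Hölder's inequality makes `log ∘ b` convex on `(1, ∞)`, and the recursion fixes its increments
over unit steps: `log b s - log b (s - 1) = log (s / Ψ (s δ))`. The slope of `log ∘ b` over
`[nγ, (n + 1)γ]` is therefore squeezed between its slopes over the adjacent unit intervals, so
`log (a (n + 1) / a n)` lies between `γ log (s / Ψ (s δ))` at `s = nγ` and at `s = (n + 1)γ + 1`.
Wendel's limit `Γ (x + α) / Γ x ∼ x ^ α`, a consequence of the log-convexity of `Γ`, makes both
bounds `log (K (n + 1)) + o(1)`, and the ratio test gives the radius of convergence `1 / K = z₀`. -/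

open Filter Set Topology Real

namespace Real

lemma log_Gamma_add_one {x : ℝ} (hx : 0 < x) : log (Gamma (x + 1)) = log (Gamma x) + log x := by
  rw [Gamma_add_one hx.ne', log_mul hx.ne' (Gamma_pos_of_pos hx).ne', add_comm]

lemma log_Gamma_add_le {x α : ℝ} (hx : 0 < x) (h0 : 0 ≤ α) (h1 : α ≤ 1) :
    log (Gamma (x + α)) ≤ log (Gamma x) + α * log x := by
  have h := convexOn_log_Gamma.2 (mem_Ioi.2 hx) (mem_Ioi.2 (by linarith : 0 < x + 1))
    (by linarith : 0 ≤ 1 - α) h0 (by ring)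
  simp only [smul_eq_mul, Function.comp_apply, log_Gamma_add_one hx] at h
  rw [show (1 - α) * x + α * (x + 1) = x + α by ring] at h
  linarith

lemma log_Gamma_add_ge {x α : ℝ} (hx : 0 < x) (h0 : 0 ≤ α) (h1 : α ≤ 1) :
    log (Gamma x) + log x - (1 - α) * log (x + α) ≤ log (Gamma (x + α)) := by
  have hxα : 0 < x + α := by linarith
  have h := convexOn_log_Gamma.2 (mem_Ioi.2 hxα) (mem_Ioi.2 (by linarith : 0 < x + α + 1))
    h0 (by linarith : 0 ≤ 1 - α) (by ring)
  simp only [smul_eq_mul, Function.comp_apply, log_Gamma_add_one hxα] at h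
  rw [show α * (x + α) + (1 - α) * (x + α + 1) = x + 1 by ring, log_Gamma_add_one hx] at h
  linarith

lemma tendsto_log_Gamma_add_sub_log_Gamma_sub {α : ℝ} (h0 : 0 ≤ α) (h1 : α ≤ 1) :
    Tendsto (fun x => log (Gamma (x + α)) - log (Gamma x) - α * log x) atTop (𝓝 0) := by
  have hlow : Tendsto (fun x => -((1 - α) * (log (x + α) - log x))) atTop (𝓝 0) := by
    simpa using ((tendsto_log_comp_add_sub_log α).const_mul (1 - α)).neg
  refine tendsto_of_tendsto_of_tendsto_of_le_of_le' hlow tendsto_const_nhds ?_ ?_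
  · filter_upwards [eventually_gt_atTop 0] with x hx
    linarith [log_Gamma_add_ge hx h0 h1]
  · filter_upwards [eventually_gt_atTop 0] with x hx
    linarith [log_Gamma_add_le hx h0 h1]

end Real

lemma tendsto_mul_log_div_sub_log {α δ c₀ γ : ℝ} (h0 : 0 ≤ α) (h1 : α ≤ 1) (hδ : 0 < δ)
    (hc₀ : 0 < c₀) (hγ : (1 - α) * γ = 1) {Ψ : ℝ → ℝ}
    (hΨ : ∀ s, Ψ s = c₀ * Gamma (s + α) / Gamma s) :
    Tendsto (fun s => γ * log (s / Ψ (s * δ)) - log s) atTop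
      (𝓝 (log ((c₀ * δ ^ α) ^ γ)⁻¹)) := by
  have hW := (((tendsto_log_Gamma_add_sub_log_Gamma_sub h0 h1).comp
    (tendsto_id.atTop_mul_const hδ)).neg.sub_const (log (c₀ * δ ^ α))).const_mul γ
  rw [neg_zero, zero_sub] at hW
  rw [log_inv, log_rpow (by positivity), neg_mul_eq_mul_neg]
  refine hW.congr' ?_
  filter_upwards [eventually_gt_atTop 0] with s hs
  have hΓ : 0 < Gamma (s * δ) := by positivity
  rw [Function.comp_apply, id, hΨ, log_div hs.ne' (by positivity), log_div (by positivity) hΓ.ne',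
    log_mul hc₀.ne' (by positivity), log_mul hc₀.ne' (by positivity), log_rpow hδ,
    log_mul hs.ne' hδ.ne']
  linear_combination -log s * hγ

lemma convexOn_log_of_le_rpow_mul_rpow {s : Set ℝ} (hs : Convex ℝ s) {b : ℝ → ℝ}
    (hb : ∀ x ∈ s, 0 < b x)
    (h : ∀ p q r, p ∈ s → r ∈ s → r < q → q < p →
      b q ≤ b p ^ ((q - r) / (p - r)) * b r ^ ((p - q) / (p - r))) :
    ConvexOn ℝ s (log ∘ b) := by
  refine convexOn_iff_slope_mono_adjacent.2 ⟨hs, fun x y z hx hz hxy hyz => ?_⟩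
  have hy : y ∈ s := hs.ordConnected.out hx hz ⟨hxy.le, hyz.le⟩
  have hlog := log_le_log (hb y hy) (h z y x hz hx hxy hyz)
  rw [log_mul (rpow_pos_of_pos (hb z hz) _).ne' (rpow_pos_of_pos (hb x hx) _).ne',
    log_rpow (hb z hz), log_rpow (hb x hx)] at hlog
  have hzx : 0 < z - x := by linarith
  rw [div_le_div_iff₀ (by linarith) (by linarith)]
  rw [div_mul_eq_mul_div, div_mul_eq_mul_div, ← add_div, le_div_iff₀ hzx] at hlog
  simp only [Function.comp_apply]
  nlinarith

lemma ConvexOn.slope_le_slope_le {s : Set ℝ} {g : ℝ → ℝ} (hg : ConvexOn ℝ s g) {x h : ℝ}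
    (hh : 0 < h) (hl : x - 1 ∈ s) (hr : x + h + 1 ∈ s) :
    g x - g (x - 1) ≤ (g (x + h) - g x) / h ∧
      (g (x + h) - g x) / h ≤ g (x + h + 1) - g (x + h) := by
  have hx : x ∈ s := hg.1.ordConnected.out hl hr ⟨by linarith, by linarith⟩
  have hxh : x + h ∈ s := hg.1.ordConnected.out hl hr ⟨by linarith, by linarith⟩
  have h₁ := hg.slope_mono_adjacent hl hxh (by linarith : x - 1 < x) (by linarith : x < x + h)
  have h₂ := hg.slope_mono_adjacent hx hr (by linarith : x < x + h)
    (by linarith : x + h < x + h + 1)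
  simp only [sub_sub_cancel, add_sub_cancel_left, div_one] at h₁ h₂
  exact ⟨h₁, h₂⟩

lemma ConvexOn.tendsto_sub_sub_log_add {g φ : ℝ → ℝ} {γ l : ℝ} (hg : ConvexOn ℝ (Ioi 1) g)
    (hstep : ∀ s, 1 < s → g s - g (s - 1) = φ s) (hγ : 0 < γ)
    (hφ : Tendsto (fun s => γ * φ s - log s) atTop (𝓝 l)) :
    Tendsto (fun s => g (s + γ) - g s - log (s + γ)) atTop (𝓝 l) := by
  have hlow : Tendsto (fun s => (γ * φ s - log s) - (log (s + γ) - log s)) atTop (𝓝 l) := by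
    simpa using hφ.sub (tendsto_log_comp_add_sub_log γ)
  have hup : Tendsto (fun s => (γ * φ (s + γ + 1) - log (s + γ + 1)) +
      (log (s + γ + 1) - log (s + γ))) atTop (𝓝 l) := by
    have hshift := tendsto_atTop_add_const_right atTop γ tendsto_id
    simpa [add_assoc] using (hφ.comp (tendsto_atTop_add_const_right atTop 1 hshift)).add
      ((tendsto_log_comp_add_sub_log 1).comp hshift)
  refine tendsto_of_tendsto_of_tendsto_of_le_of_le' hlow hup ?_ ?_ <;>
  filter_upwards [eventually_gt_atTop 2] with s hs
  · have h := (hg.slope_le_slope_le hγ (mem_Ioi.2 (by linarith)) (mem_Ioi.2 (by linarith))).1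
    rw [hstep s (by linarith), le_div_iff₀ hγ] at h
    linarith
  · have h := (hg.slope_le_slope_le hγ (mem_Ioi.2 (by linarith)) (mem_Ioi.2 (by linarith))).2
    have hφ' := hstep (s + γ + 1) (by linarith)
    rw [add_sub_cancel_right] at hφ'
    rw [hφ', div_le_iff₀ hγ] at h
    linarith

lemma tendsto_div_mul_of_tendsto_log_sub {b : ℝ → ℝ} {γ K : ℝ} (hb : ∀ r, 0 < r → 0 < b r)
    (hγ : 0 < γ) (hK : 0 < K)
    (h : Tendsto (fun s => log (b (s + γ)) - log (b s) - log (s + γ)) atTop (𝓝 (log (K / γ)))) :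
    Tendsto (fun n : ℕ => b (((n : ℝ) + 1) * γ) / b ((n : ℝ) * γ) / (K * ((n : ℝ) + 1)))
      atTop (𝓝 1) := by
  have h' := ((h.comp (tendsto_natCast_atTop_atTop.atTop_mul_const hγ)).sub_const
    (log (K / γ))).rexp
  rw [sub_self, exp_zero] at h'
  refine h'.congr' ?_
  filter_upwards [eventually_gt_atTop 0] with n hn
  have hn' : (0 : ℝ) < n := Nat.cast_pos.2 hn
  rw [Function.comp_apply, show (n : ℝ) * γ + γ = ((n : ℝ) + 1) * γ by ring, exp_sub, exp_sub,
    exp_sub, exp_log (hb _ (by positivity)), exp_log (hb _ (by positivity)),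
    exp_log (by positivity), exp_log (by positivity)]
  field_simp

lemma tendsto_norm_ratio_mul_pow_div_factorial {a : ℕ → ℝ} {K : ℝ} (ha : ∀ᶠ n in atTop, 0 < a n)
    (hK : 0 < K) (h : Tendsto (fun n : ℕ => a (n + 1) / a n / (K * ((n : ℝ) + 1))) atTop (𝓝 1))
    {z : ℝ} (hz : z ≠ 0) :
    Tendsto (fun n => ‖a (n + 1) * z ^ (n + 1) / ((n + 1).factorial : ℝ)‖ /
      ‖a n * z ^ n / (n.factorial : ℝ)‖) atTop (𝓝 (K * ‖z‖)) := by
  refine (one_mul (K * ‖z‖) ▸ h.mul_const (K * ‖z‖)).congr' ?_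
  filter_upwards [ha, (tendsto_add_atTop_nat 1).eventually ha] with n h₀ h₁
  simp only [norm_div, norm_mul, norm_pow, Real.norm_of_nonneg h₀.le, Real.norm_of_nonneg h₁.le,
    Nat.factorial_succ, Nat.cast_mul, RCLike.norm_natCast]
  have : ‖z‖ ≠ 0 := norm_ne_zero_iff.2 hz
  field_simp
  push_cast
  ring

lemma summable_mul_pow_div_factorial_of_ratio {a : ℕ → ℝ} {K : ℝ} (ha : ∀ᶠ n in atTop, 0 < a n)
    (hK : 0 < K) (h : Tendsto (fun n : ℕ => a (n + 1) / a n / (K * ((n : ℝ) + 1))) atTop (𝓝 1))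
    {z : ℝ} (hz : K * ‖z‖ < 1) :
    Summable (fun n => a n * z ^ n / (n.factorial : ℝ)) := by
  rcases eq_or_ne z 0 with rfl | hz₀
  · exact summable_of_ne_finset_zero (s := {0}) fun n hn => by
      simp [zero_pow (by simpa using hn : n ≠ 0)]
  refine summable_of_ratio_test_tendsto_lt_one hz ?_
    (tendsto_norm_ratio_mul_pow_div_factorial ha hK h hz₀)
  filter_upwards [ha] with n hn
  exact div_ne_zero (mul_ne_zero hn.ne' (pow_ne_zero n hz₀))
    (Nat.cast_ne_zero.2 n.factorial_ne_zero)

lemma not_summable_mul_pow_div_factorial_of_ratio {a : ℕ → ℝ} {K : ℝ}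
    (ha : ∀ᶠ n in atTop, 0 < a n) (hK : 0 < K)
    (h : Tendsto (fun n : ℕ => a (n + 1) / a n / (K * ((n : ℝ) + 1))) atTop (𝓝 1))
    {z : ℝ} (hz : 1 < K * ‖z‖) :
    ¬ Summable (fun n => a n * z ^ n / (n.factorial : ℝ)) :=
  not_summable_of_ratio_test_tendsto_gt_one hz <|
    tendsto_norm_ratio_mul_pow_div_factorial ha hK h (by rintro rfl; simp at hz; linarith)

lemma rpow_one_sub_div_rpow {α γ M : ℝ} (hγ : 0 < γ) (hM : 0 < M) (h : (1 - α) * γ = 1) :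
    (γ ^ (1 - α) / M) ^ γ = γ / M ^ γ := by
  rw [div_rpow (by positivity) hM.le, ← rpow_mul hγ.le, h, rpow_one]

lemma one_sub_mul_rpow_mul_rpow {α γ c δ : ℝ} (hγ : 0 < γ) (hc : 0 < c) (hδ : 0 < δ)
    (h : (1 - α) * γ = 1) : (1 - α) * c ^ γ * δ ^ (α * γ) = (c * δ ^ α) ^ γ / γ := by
  rw [mul_rpow hc.le (by positivity), ← rpow_mul hδ.le, eq_div_iff hγ.ne']
  linear_combination c ^ γ * δ ^ (α * γ) * h

/-- Moment growth and radius of convergence for the perpetual integral of a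
stable subordinator. With `γ = 1/(1-α)`, `Ψ(s) = c₀Γ(s+α)/Γ(s)`,
`z₀ = (1-α)c₀^γ δ^{αγ}` and `K = (γ^{1-α}/(c₀δ^α))^γ`, if `b : (0,∞) → (0,∞)` satisfies the
Bertoin–Yor recursion `b(r) = (r/Ψ(rδ)) b(r-1)` for `r > 1` and the Hölder log-convexity
inequality, then `a_n := b(nγ)` satisfies `a_{n+1}/a_n ∼ K(n+1)` (with `K = 1/z₀`), and
`Σ a_n z^n/n!` converges for `0 < z < z₀` and diverges for `z > z₀`. -/
theorem stmt_12 (α δ c₀ : ℝ) (hα : α ∈ Ioo (0 : ℝ) 1) (hδ : 0 < δ) (hc₀ : 0 < c₀)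
    (γ : ℝ) (hγ : γ = 1 / (1 - α))
    (Ψ : ℝ → ℝ) (hΨ : ∀ s, Ψ s = c₀ * Real.Gamma (s + α) / Real.Gamma s)
    (z₀ : ℝ) (hz₀ : z₀ = (1 - α) * c₀ ^ γ * δ ^ (α * γ))
    (K : ℝ) (hK : K = (γ ^ (1 - α) / (c₀ * δ ^ α)) ^ γ)
    (b : ℝ → ℝ) (hb_pos : ∀ r : ℝ, 0 < r → 0 < b r)
    (hrec : ∀ r : ℝ, 1 < r → b r = r / Ψ (r * δ) * b (r - 1))
    (hconv : ∀ p q r : ℝ, 1 < r → r ≤ q → q ≤ p → r < p →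
      b q ≤ b p ^ ((q - r) / (p - r)) * b r ^ ((p - q) / (p - r))) :
    K * z₀ = 1 ∧
    Tendsto (fun n : ℕ =>
        b (((n : ℝ) + 1) * γ) / b ((n : ℝ) * γ) / (K * ((n : ℝ) + 1)))
      atTop (𝓝 1) ∧
    (∀ z : ℝ, 0 < z → z < z₀ →
      Summable (fun n : ℕ => b ((n : ℝ) * γ) * z ^ n / (n.factorial : ℝ))) ∧
    (∀ z : ℝ, z₀ < z →
      ¬ Summable (fun n : ℕ => b ((n : ℝ) * γ) * z ^ n / (n.factorial : ℝ))) := by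
  obtain ⟨hα0, hα1⟩ := hα
  have hγ0 : 0 < γ := by rw [hγ]; exact one_div_pos.2 (sub_pos.2 hα1)
  have hγα : (1 - α) * γ = 1 := by rw [hγ]; field_simp [(sub_pos.2 hα1).ne']
  have hM : 0 < c₀ * δ ^ α := by positivity
  have hKM : K = γ / (c₀ * δ ^ α) ^ γ := hK ▸ rpow_one_sub_div_rpow hγ0 hM hγα
  have hK0 : 0 < K := by rw [hKM]; positivity
  have hKz₀ : K * z₀ = 1 := by
    rw [hKM, hz₀, one_sub_mul_rpow_mul_rpow hγ0 hc₀ hδ hγα]; field_simp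
  have hg : ConvexOn ℝ (Ioi 1) (log ∘ b) := convexOn_log_of_le_rpow_mul_rpow (convex_Ioi 1)
    (fun x hx => hb_pos x (zero_lt_one.trans hx))
    fun p q r _ hr hrq hqp => hconv p q r hr hrq.le hqp.le (hrq.trans hqp)
  have hstep : ∀ s, 1 < s → (log ∘ b) s - (log ∘ b) (s - 1) = log (s / Ψ (s * δ)) := by
    intro s hs
    have hρ : 0 < s / Ψ (s * δ) := by rw [hΨ]; have : 0 < s := zero_lt_one.trans hs; positivity
    rw [Function.comp_apply, Function.comp_apply, hrec s hs,
      log_mul hρ.ne' (hb_pos _ (by linarith)).ne', add_sub_cancel_right]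
  have hφ := tendsto_mul_log_div_sub_log hα0.le hα1.le hδ hc₀ hγα hΨ
  rw [← div_div_cancel_left' hγ0.ne', ← hKM] at hφ
  have hratio := tendsto_div_mul_of_tendsto_log_sub hb_pos hγ0 hK0
    (hg.tendsto_sub_sub_log_add hstep hγ0 hφ)
  have ha : ∀ᶠ n : ℕ in atTop, 0 < b (n * γ) :=
    (eventually_gt_atTop 0).mono fun n hn => hb_pos _ (by positivity)
  have hratio' : Tendsto (fun n : ℕ => b ((n + 1 : ℕ) * γ) / b (n * γ) / (K * ((n : ℝ) + 1)))
      atTop (𝓝 1) := by simpa using hratio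
  refine ⟨hKz₀, hratio,
    fun z hz hzz₀ => summable_mul_pow_div_factorial_of_ratio ha hK0 hratio' ?_,
    fun z hzz₀ => not_summable_mul_pow_div_factorial_of_ratio ha hK0 hratio' ?_⟩
  · rw [norm_of_nonneg hz.le]
    linarith [mul_lt_mul_of_pos_left hzz₀ hK0]
  · linarith [mul_lt_mul_of_pos_left (hzz₀.trans_le (le_norm_self z)) hK0]
end

section
/- Let 0 < α < 1 and β > α, and define c_n := Π_{k=1}^{n} Γ(k(β−α)+1) / Γ(k(β−α)+α) for n ≥ 1. Then the sequence (c_n) satisfies the Carleman condition: Σ_{n≥1} c_n^{−1/(2n)} = ∞. -/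
/-!
Log-convexity of `Γ` gives Gautschi's inequality `Γ(x + 1) / Γ(x + α) ≤ (x + 1) ^ (1 - α)`.
Hence each of the `n` factors of `c_n` is at most `(n (β - α) + 1) ^ (1 - α)`, so
`c_n ^ (-1 / (2n)) ≥ (n (β - α) + 1) ^ (-(1 - α) / 2)`, and the Carleman series dominates a
`p`-series with exponent `(1 - α) / 2 < 1`.
-/

namespace Real

theorem Gamma_add_one_div_Gamma_add_pos {α x : ℝ} (hα : 0 < α) (hx : 0 ≤ x) :
    0 < Gamma (x + 1) / Gamma (x + α) :=
  div_pos (Gamma_pos_of_pos (by linarith)) (Gamma_pos_of_pos (by linarith))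

/-- The slope of the convex function `log ∘ Γ` on `[x + α, x + 1]` is at most its slope
`log (x + 1)` on `[x + 1, x + 2]`. -/
theorem Gamma_add_one_div_Gamma_add_le_rpow {α x : ℝ} (hα : α < 1) (hx : 0 < x + α) :
    Gamma (x + 1) / Gamma (x + α) ≤ (x + 1) ^ (1 - α) := by
  have hx1 : 0 < x + 1 := by linarith
  have hΓ1 := Gamma_pos_of_pos hx1
  have hΓα := Gamma_pos_of_pos hx
  have hslope := convexOn_log_Gamma.slope_mono_adjacent (x := x + α) (y := x + 1) (z := x + 2)
    hx (by simp only [Set.mem_Ioi]; linarith) (by linarith) (by linarith)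
  have hrec : log (Gamma (x + 2)) - log (Gamma (x + 1)) = log (x + 1) := by
    rw [show x + 2 = x + 1 + 1 by ring, Gamma_add_one hx1.ne', log_mul hx1.ne' hΓ1.ne']
    ring
  simp only [Function.comp_apply, hrec, show x + 2 - (x + 1) = 1 by ring, div_one,
    show x + 1 - (x + α) = 1 - α by ring, div_le_iff₀ (sub_pos.2 hα)] at hslope
  rw [← log_le_log_iff (div_pos hΓ1 hΓα) (rpow_pos_of_pos hx1 _), log_div hΓ1.ne' hΓα.ne',
    log_rpow hx1]
  linarith

theorem not_summable_mul_nat_add_one_rpow_neg {C s : ℝ} (hC : 0 < C) (hs : s ≤ 1) :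
    ¬ Summable (fun n : ℕ ↦ (C * (n + 1)) ^ (-s)) := by
  have hshift : ¬ Summable (fun n : ℕ ↦ ((n + 1 : ℕ) : ℝ) ^ (-s)) := by
    rw [summable_nat_add_iff (f := fun n : ℕ ↦ (n : ℝ) ^ (-s)) 1, summable_nat_rpow]
    linarith
  push_cast at hshift
  have hsplit : (fun n : ℕ ↦ (C * (n + 1)) ^ (-s)) =
      fun n : ℕ ↦ C ^ (-s) * ((n : ℝ) + 1) ^ (-s) :=
    funext fun n ↦ mul_rpow hC.le (by positivity)
  rwa [hsplit, summable_mul_left_iff (rpow_pos_of_pos hC _).ne']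

end Real

open Real

/-- The moment `c_n = E[ρ_{α,β} ^ n]`. -/
noncomputable def rhoMoment (α β : ℝ) (n : ℕ) : ℝ :=
  ∏ k ∈ Finset.Icc 1 n, Gamma (k * (β - α) + 1) / Gamma (k * (β - α) + α)

section rhoMoment

variable {α β : ℝ}

theorem rhoMoment_pos (hα0 : 0 < α) (hβ : α ≤ β) (n : ℕ) : 0 < rhoMoment α β n :=
  Finset.prod_pos fun k _ ↦
    Gamma_add_one_div_Gamma_add_pos hα0 (mul_nonneg k.cast_nonneg (sub_nonneg.2 hβ))

theorem rhoMoment_le (hα0 : 0 < α) (hα1 : α < 1) (hβ : α ≤ β) (n : ℕ) :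
    rhoMoment α β n ≤ ((n * (β - α) + 1) ^ (1 - α)) ^ n := by
  have hd : 0 ≤ β - α := sub_nonneg.2 hβ
  calc rhoMoment α β n ≤ ∏ _k ∈ Finset.Icc 1 n, ((n : ℝ) * (β - α) + 1) ^ (1 - α) := by
        refine Finset.prod_le_prod (fun k _ ↦ ?_) fun k hk ↦ ?_
        · exact (Gamma_add_one_div_Gamma_add_pos hα0 (mul_nonneg k.cast_nonneg hd)).le
        · have hkn : (k : ℝ) ≤ n := by exact_mod_cast (Finset.mem_Icc.1 hk).2
          have hk : 0 ≤ (k : ℝ) * (β - α) := mul_nonneg k.cast_nonneg hd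
          refine (Gamma_add_one_div_Gamma_add_le_rpow hα1 (by linarith)).trans ?_
          gcongr
    _ = _ := by simp

theorem rpow_le_rhoMoment_rpow (hα0 : 0 < α) (hα1 : α < 1) (hβ : α ≤ β) {n : ℕ} (hn : n ≠ 0) :
    ((n : ℝ) * (β - α) + 1) ^ (-((1 - α) / 2)) ≤ rhoMoment α β n ^ (-1 / (2 * (n : ℝ))) := by
  have hM : 0 < (n : ℝ) * (β - α) + 1 := by
    have := mul_nonneg n.cast_nonneg (sub_nonneg.2 hβ)
    linarith
  calc ((n : ℝ) * (β - α) + 1) ^ (-((1 - α) / 2))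
      = (((n * (β - α) + 1) ^ (1 - α)) ^ n) ^ (-1 / (2 * (n : ℝ))) := by
        rw [← rpow_natCast, ← rpow_mul hM.le, ← rpow_mul hM.le]
        congr 1
        field_simp
    _ ≤ rhoMoment α β n ^ (-1 / (2 * (n : ℝ))) :=
        rpow_le_rpow_of_nonpos (rhoMoment_pos hα0 hβ n) (rhoMoment_le hα0 hα1 hβ n)
          (div_nonpos_of_nonpos_of_nonneg (by norm_num) (by positivity))

end rhoMoment

/-- For `0 < α < 1` and `β > α`, the moment sequence
`c_n := ∏_{k=1}^n Γ(k(β-α)+1)/Γ(k(β-α)+α)` satisfies the Carleman condition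
`Σ_{n≥1} c_n^{-1/(2n)} = ∞`. -/
theorem stmt_13 (α β : ℝ) (hα0 : 0 < α) (hα1 : α < 1) (hβ : α < β) :
    ¬ Summable (fun n : ℕ =>
      (∏ k ∈ Finset.Icc 1 (n + 1),
          Real.Gamma ((k : ℝ) * (β - α) + 1) / Real.Gamma ((k : ℝ) * (β - α) + α))
        ^ (-(1 : ℝ) / (2 * ((n : ℝ) + 1)))) := by
  change ¬ Summable fun n : ℕ ↦ rhoMoment α β (n + 1) ^ (-1 / (2 * ((n : ℝ) + 1)))
  intro h
  refine not_summable_mul_nat_add_one_rpow_neg (C := β - α + 1) (s := (1 - α) / 2)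
    (by linarith) (by linarith) (h.of_nonneg_of_le (fun n ↦ ?_) fun n ↦ ?_)
  · exact rpow_nonneg (mul_nonneg (by linarith) (by positivity)) _
  · have hlower := rpow_le_rhoMoment_rpow hα0 hα1 hβ.le n.succ_ne_zero
    push_cast at hlower
    refine (rpow_le_rpow_of_nonpos (by positivity) ?_ (by linarith)).trans hlower
    nlinarith
end

section
/- Let α ∈ (0,1) and let ψ : (0,∞) → (−∞,0) be continuous with −ψ regularly varying at 0 with index α, and assume ∫_0^1 du/(−ψ(u)) < ∞. Define Φ(w) := ∫_0^w du/(−ψ(u)) (finite, continuous and strictly increasing near 0), let v denote the inverse of Φ on a right neighbourhood of 0, and set φ(x) := Φ(1/x) = ∫_0^{1/x} du/(−ψ(u)) for large x. Then for every fixed t > 0: x · v( t·φ(x) ) → t^{1/(1−α)} as x → ∞, and consequently exp( −x·v(t·φ(x)) ) → exp( −t^{1/(1−α)} ) as x → ∞. (In the CSBP interpretation, v(s) = u_s(0+) and exp(−x v(tφ(x))) = P_x(T_∞^+ / φ(x) > t), so the renormalized explosion time T_∞^+/φ(x) converges in law to the Weibull distribution with shape parameter 1/(1−α).) -/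
open MeasureTheory Filter Set Topology

/-!
Write `g = 1 / (-ψ)`, so that `Φ` is the primitive of `g` vanishing at `0`. Since `g` is regularly
varying with index `-α`, the ratio `c * g (c * u) / g u` tends to `c ^ (1 - α)` as `u → 0+`, and
`Φ (c * w) / Φ w` is the average of that ratio over `(0, w)` against the weight `g`; hence `Φ` is
regularly varying with index `1 - α`. Inverting the monotone `Φ`: eventually
`Φ (c * w) < t * Φ w = Φ (v (t * Φ w))` when `c ^ (1 - α) < t`, and the reverse inequality when
`t < c ^ (1 - α)`, which squeezes `v (t * Φ w) / w` to `t ^ (1 / (1 - α))`. Then put `w = 1 / x`.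
-/
def RegularlyVaryingAtZero (f : ℝ → ℝ) (ρ : ℝ) : Prop :=
  ∀ c : ℝ, 0 < c → Tendsto (fun s => f (c * s) / f s) (𝓝[>] 0) (𝓝 (c ^ ρ))

namespace RegularlyVaryingAtZero

variable {f : ℝ → ℝ} {ρ : ℝ}

theorem neg (hf : RegularlyVaryingAtZero f ρ) : RegularlyVaryingAtZero (fun s => -f s) ρ := by
  intro c hc
  simpa only [neg_div_neg_eq] using hf c hc

theorem one_div (hf : RegularlyVaryingAtZero f ρ) :
    RegularlyVaryingAtZero (fun s => 1 / f s) (-ρ) := by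
  intro c hc
  have h := (hf c hc).inv₀ (Real.rpow_pos_of_pos hc ρ).ne'
  rw [← Real.rpow_neg hc.le] at h
  refine h.congr fun s => ?_
  simp only [_root_.one_div, inv_div_inv, inv_div]

theorem congr {g : ℝ → ℝ} (hf : RegularlyVaryingAtZero f ρ) (hfg : EqOn f g (Ioi 0)) :
    RegularlyVaryingAtZero g ρ := by
  intro c hc
  refine (hf c hc).congr' ?_
  filter_upwards [self_mem_nhdsWithin] with s (hs : 0 < s)
  rw [hfg hs, hfg (mul_pos hc hs)]

end RegularlyVaryingAtZero

section Primitive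

variable {g : ℝ → ℝ}

theorem setIntegral_Ioo_zero_mul_left (g : ℝ → ℝ) {c w : ℝ} (hc : 0 < c) (hw : 0 ≤ w) :
    ∫ u in Ioo 0 (c * w), g u = ∫ u in Ioo 0 w, c * g (c * u) := by
  have h := intervalIntegral.smul_integral_comp_mul_left (f := g) (a := 0) (b := w) c
  rw [mul_zero, intervalIntegral.integral_of_le (mul_nonneg hc.le hw),
    intervalIntegral.integral_of_le hw, smul_eq_mul, ← integral_const_mul] at h
  rw [← integral_Ioc_eq_integral_Ioo, ← h, integral_Ioc_eq_integral_Ioo]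

theorem MeasureTheory.IntegrableOn.comp_mul_left_Ioo_zero {c a : ℝ} (hc : 0 < c) (ha : 0 ≤ a)
    (hg : IntegrableOn g (Ioo 0 (c * a))) : IntegrableOn (fun u => g (c * u)) (Ioo 0 a) := by
  rw [← intervalIntegrable_iff_integrableOn_Ioo_of_le (mul_nonneg hc.le ha)] at hg
  have h := hg.comp_mul_left (c := c)
  rwa [zero_div, mul_div_cancel_left₀ _ hc.ne',
    intervalIntegrable_iff_integrableOn_Ioo_of_le ha] at h

theorem setIntegral_Ioo_zero_pos (hg : ∀ u, 0 < u → 0 < g u) {w : ℝ} (hw : 0 < w)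
    (hgi : IntegrableOn g (Ioo 0 w)) : 0 < ∫ u in Ioo 0 w, g u := by
  refine setIntegral_pos_iff_support_of_nonneg_ae
    ((ae_restrict_iff' measurableSet_Ioo).2 (.of_forall fun u hu => (hg u hu.1).le)) hgi |>.2 ?_
  calc (0 : ENNReal) < volume (Ioo 0 w) := by simpa using hw
    _ ≤ volume (Function.support g ∩ Ioo 0 w) :=
      measure_mono fun u hu => ⟨(hg u hu.1).ne', hu⟩

theorem setIntegral_Ioo_zero_mono (hg : ∀ u, 0 < u → 0 ≤ g u) {x y : ℝ} (hxy : x ≤ y)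
    (hgi : IntegrableOn g (Ioo 0 y)) : ∫ u in Ioo 0 x, g u ≤ ∫ u in Ioo 0 y, g u :=
  setIntegral_mono_set hgi
    ((ae_restrict_iff' measurableSet_Ioo).2 (.of_forall fun u hu => hg u hu.1))
    (Ioo_subset_Ioo_right hxy).eventuallyLE

theorem lt_of_setIntegral_Ioo_zero_lt (hg : ∀ u, 0 < u → 0 ≤ g u) {x y : ℝ}
    (hy : 0 < ∫ u in Ioo 0 y, g u) (h : ∫ u in Ioo 0 y, g u < ∫ u in Ioo 0 x, g u) :
    y < x := by
  by_contra! hxy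
  exact (setIntegral_Ioo_zero_mono hg hxy (Integrable.of_integral_ne_zero hy.ne')).not_gt h

theorem tendsto_setIntegral_Ioo_zero_nhdsGT (hg : ∀ u, 0 < u → 0 < g u)
    (hgi : IntegrableOn g (Ioo 0 1)) :
    Tendsto (fun w => ∫ u in Ioo 0 w, g u) (𝓝[>] 0) (𝓝[>] 0) := by
  have hIcc : IntegrableOn g (uIcc 0 1) := by
    rw [uIcc_of_le zero_le_one]
    exact (integrableOn_Icc_iff_integrableOn_Ioo (f := g)).2 hgi
  have hcont := (intervalIntegral.continuousOn_primitive_interval hIcc 0 left_mem_uIcc).tendsto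
  rw [uIcc_of_le zero_le_one, intervalIntegral.integral_same] at hcont
  have hle : 𝓝[>] (0 : ℝ) ≤ 𝓝[Icc 0 1] 0 :=
    (nhdsWithin_Ioo_eq_nhdsGT one_pos).symm.le.trans (nhdsWithin_mono _ Ioo_subset_Icc_self)
  refine tendsto_nhdsWithin_iff.2 ⟨(hcont.mono_left hle).congr' ?_, ?_⟩
  · filter_upwards [self_mem_nhdsWithin] with w (hw : 0 < w)
    rw [intervalIntegral.integral_of_le hw.le, integral_Ioc_eq_integral_Ioo]
  · filter_upwards [Ioo_mem_nhdsGT one_pos] with w hw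
    exact setIntegral_Ioo_zero_pos hg hw.1 (hgi.mono_set (Ioo_subset_Ioo_right hw.2.le))

theorem tendsto_setIntegral_Ioo_zero_div_of_tendsto_div {f : ℝ → ℝ} {a L : ℝ} (ha : 0 < a)
    (hg : ∀ u, 0 < u → 0 < g u) (hfi : IntegrableOn f (Ioo 0 a))
    (hgi : IntegrableOn g (Ioo 0 a))
    (hfg : Tendsto (fun u => f u / g u) (𝓝[>] 0) (𝓝 L)) :
    Tendsto (fun w => (∫ u in Ioo 0 w, f u) / ∫ u in Ioo 0 w, g u) (𝓝[>] 0) (𝓝 L) := by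
  rw [Metric.tendsto_nhds]
  intro ε hε
  have hpt : ∀ᶠ u in 𝓝[>] 0, |f u - L * g u| ≤ ε / 2 * g u := by
    filter_upwards [Metric.tendsto_nhds.1 hfg (ε / 2) (half_pos hε), self_mem_nhdsWithin]
      with u hu (hu0 : 0 < u)
    have hgu := hg u hu0
    rw [show f u - L * g u = (f u / g u - L) * g u by field_simp, abs_mul, abs_of_pos hgu]
    exact mul_le_mul_of_nonneg_right hu.le hgu.le
  obtain ⟨δ, hδ, hδpt⟩ := mem_nhdsGT_iff_exists_Ioo_subset.1 hpt
  filter_upwards [Ioo_mem_nhdsGT (lt_min hδ ha)] with w ⟨hw0, hw⟩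
  have hwδ : w < δ := hw.trans_le (min_le_left _ _)
  have hwa : Ioo 0 w ⊆ Ioo 0 a := Ioo_subset_Ioo_right (hw.le.trans (min_le_right _ _))
  have hfw := hfi.mono_set hwa
  have hgw := hgi.mono_set hwa
  have hGw := setIntegral_Ioo_zero_pos hg hw0 hgw
  have hest : |(∫ u in Ioo 0 w, f u) - L * ∫ u in Ioo 0 w, g u|
      ≤ ε / 2 * ∫ u in Ioo 0 w, g u := by
    rw [← integral_const_mul, ← integral_sub hfw (hgw.const_mul L), ← integral_const_mul]
    exact abs_integral_le_integral_abs.trans <|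
      setIntegral_mono_on (hfw.sub (hgw.const_mul L)).abs (hgw.const_mul _) measurableSet_Ioo
        fun u hu => hδpt ⟨hu.1, hu.2.trans hwδ⟩
  rw [Real.dist_eq, div_sub' hGw.ne', abs_div, abs_of_pos hGw, div_lt_iff₀ hGw, mul_comm _ L]
  linarith [mul_pos (half_pos hε) hGw]

theorem RegularlyVaryingAtZero.setIntegral_Ioo_zero {ρ : ℝ} (hrv : RegularlyVaryingAtZero g ρ)
    (hg : ∀ u, 0 < u → 0 < g u) (hgi : IntegrableOn g (Ioo 0 1)) :
    RegularlyVaryingAtZero (fun w => ∫ u in Ioo 0 w, g u) (ρ + 1) := by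
  intro c hc
  set a := min 1 c⁻¹
  have ha : 0 < a := lt_min one_pos (inv_pos.2 hc)
  have hca : c * a ≤ 1 := (mul_le_mul_of_nonneg_left (min_le_right _ _) hc.le).trans_eq
    (mul_inv_cancel₀ hc.ne')
  have hscaled : IntegrableOn (fun u => c * g (c * u)) (Ioo 0 a) :=
    ((hgi.mono_set (Ioo_subset_Ioo_right hca)).comp_mul_left_Ioo_zero hc ha.le).const_mul c
  have hratio : Tendsto (fun u => c * g (c * u) / g u) (𝓝[>] 0) (𝓝 (c ^ (ρ + 1))) := by
    rw [Real.rpow_add_one hc.ne', mul_comm]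
    simpa only [mul_div_assoc] using (hrv c hc).const_mul c
  refine (tendsto_setIntegral_Ioo_zero_div_of_tendsto_div ha hg hscaled
    (hgi.mono_set (Ioo_subset_Ioo_right (min_le_left _ _))) hratio).congr' ?_
  filter_upwards [self_mem_nhdsWithin] with w (hw : 0 < w)
  rw [setIntegral_Ioo_zero_mul_left g hc hw.le]

end Primitive

namespace RegularlyVaryingAtZero

variable {Φ v : ℝ → ℝ} {a t : ℝ}

theorem eventually_inverse_const_mul (ht : 0 < t) (hΦ0 : Tendsto Φ (𝓝[>] 0) (𝓝[>] 0))
    (hv : ∀ᶠ s in 𝓝[>] 0, v s ∈ Ioo 0 a ∧ Φ (v s) = s) :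
    ∀ᶠ w in 𝓝[>] 0, 0 < Φ w ∧ v (t * Φ w) ∈ Ioo 0 a ∧ Φ (v (t * Φ w)) = t * Φ w := by
  have htΦ : Tendsto (fun w => t * Φ w) (𝓝[>] 0) (𝓝[>] 0) := by
    refine tendsto_nhdsWithin_iff.2 ⟨?_, ?_⟩
    · simpa using (tendsto_nhdsWithin_iff.1 hΦ0).1.const_mul t
    · filter_upwards [(tendsto_nhdsWithin_iff.1 hΦ0).2] with w hw using mul_pos ht hw
  filter_upwards [(tendsto_nhdsWithin_iff.1 hΦ0).2, htΦ.eventually hv] with w hw hvw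
  exact ⟨hw, hvw⟩

theorem eventually_mul_lt_inverse_const_mul {c r : ℝ} (hc : 0 < c) (ha : 0 < a)
    (hr : Tendsto (fun w => Φ (c * w) / Φ w) (𝓝[>] 0) (𝓝 r)) (hrt : r < t) (ht : 0 < t)
    (hmono : MonotoneOn Φ (Ioo 0 a)) (hΦ0 : Tendsto Φ (𝓝[>] 0) (𝓝[>] 0))
    (hv : ∀ᶠ s in 𝓝[>] 0, v s ∈ Ioo 0 a ∧ Φ (v s) = s) :
    ∀ᶠ w in 𝓝[>] 0, c * w < v (t * Φ w) := by
  have hcwa : ∀ᶠ w in 𝓝[>] 0, c * w ∈ Ioo 0 a := by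
    have : Tendsto (fun w => c * w) (𝓝[>] 0) (𝓝[>] 0) :=
      tendsto_nhdsWithin_of_tendsto_nhds_of_eventually_within _
        (((continuous_const_mul c).tendsto' 0 0 (mul_zero c)).mono_left nhdsWithin_le_nhds)
        (by filter_upwards [self_mem_nhdsWithin] with w (hw : 0 < w) using mul_pos hc hw)
    exact this.eventually (Ioo_mem_nhdsGT ha)
  filter_upwards [eventually_inverse_const_mul ht hΦ0 hv, hr.eventually (gt_mem_nhds hrt), hcwa]
    with w ⟨hΦw, hvw, hΦvw⟩ hratio hcw
  by_contra! hle
  have := hmono hvw hcw hle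
  rw [hΦvw, ← le_div_iff₀ hΦw] at this
  exact this.not_gt hratio

theorem eventually_inverse_const_mul_lt {c r : ℝ} (hc : 0 < c)
    (hr : Tendsto (fun w => Φ (c * w) / Φ w) (𝓝[>] 0) (𝓝 r)) (htr : t < r) (ht : 0 < t)
    (hmono : MonotoneOn Φ (Ioo 0 a)) (hΦ0 : Tendsto Φ (𝓝[>] 0) (𝓝[>] 0))
    (hv : ∀ᶠ s in 𝓝[>] 0, v s ∈ Ioo 0 a ∧ Φ (v s) = s) :
    ∀ᶠ w in 𝓝[>] 0, v (t * Φ w) < c * w := by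
  filter_upwards [eventually_inverse_const_mul ht hΦ0 hv, hr.eventually (lt_mem_nhds htr),
    self_mem_nhdsWithin] with w ⟨hΦw, hvw, hΦvw⟩ hratio (hw : 0 < w)
  by_contra! hle
  have := hmono ⟨mul_pos hc hw, hle.trans_lt hvw.2⟩ hvw hle
  rw [hΦvw, ← div_le_iff₀ hΦw] at this
  exact this.not_gt hratio

theorem tendsto_inverse_const_mul_div {ρ : ℝ} (hrv : RegularlyVaryingAtZero Φ ρ) (hρ : 0 < ρ)
    (ha : 0 < a) (hmono : MonotoneOn Φ (Ioo 0 a)) (hΦ0 : Tendsto Φ (𝓝[>] 0) (𝓝[>] 0))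
    (hv : ∀ᶠ s in 𝓝[>] 0, v s ∈ Ioo 0 a ∧ Φ (v s) = s) (ht : 0 < t) :
    Tendsto (fun w => v (t * Φ w) / w) (𝓝[>] 0) (𝓝 (t ^ (1 / ρ))) := by
  have hpow : (t ^ (1 / ρ)) ^ ρ = t := by
    rw [← Real.rpow_mul ht.le, one_div_mul_cancel hρ.ne', Real.rpow_one]
  rw [tendsto_order]
  refine ⟨fun b hb => ?_, fun b hb => ?_⟩
  · rcases le_or_gt b 0 with hb0 | hb0
    · filter_upwards [eventually_inverse_const_mul ht hΦ0 hv, self_mem_nhdsWithin]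
        with w ⟨_, hvw, _⟩ (hw : 0 < w)
      exact hb0.trans_lt (div_pos hvw.1 hw)
    · filter_upwards [eventually_mul_lt_inverse_const_mul hb0 ha (hrv b hb0)
        (hpow ▸ Real.rpow_lt_rpow hb0.le hb hρ) ht hmono hΦ0 hv, self_mem_nhdsWithin]
        with w h (hw : 0 < w)
      exact (lt_div_iff₀ hw).2 h
  · have hb0 : 0 < b := (Real.rpow_pos_of_pos ht _).trans hb
    have htb : t < b ^ ρ := hpow ▸ Real.rpow_lt_rpow (Real.rpow_nonneg ht.le _) hb hρ
    filter_upwards [eventually_inverse_const_mul_lt hb0 (hrv b hb0) htb ht hmono hΦ0 hv,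
      self_mem_nhdsWithin] with w h (hw : 0 < w)
    exact (div_lt_iff₀ hw).2 h

end RegularlyVaryingAtZero

theorem stmt_18_general (α : ℝ) (hα : α ∈ Ioo (0 : ℝ) 1)
    (ψ : ℝ → ℝ)
    (hψ_neg : ∀ s : ℝ, 0 < s → ψ s < 0)
    (hψ_rv : ∀ c : ℝ, 0 < c →
      Tendsto (fun s => ψ (c * s) / ψ s) (𝓝[>] 0) (𝓝 (c ^ α)))
    (hint : IntegrableOn (fun u => 1 / (-ψ u)) (Ioo 0 1))
    (Φ : ℝ → ℝ) (hΦ : ∀ w : ℝ, 0 < w → Φ w = ∫ u in Ioo 0 w, 1 / (-ψ u))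
    (v : ℝ → ℝ) (hv : ∀ᶠ w in 𝓝[>] (0 : ℝ), 0 < v w ∧ Φ (v w) = w) :
    ∀ t : ℝ, 0 < t →
      Tendsto (fun x => x * v (t * Φ (1 / x))) atTop (𝓝 (t ^ (1 / (1 - α)))) ∧
      Tendsto (fun x => Real.exp (-(x * v (t * Φ (1 / x))))) atTop
        (𝓝 (Real.exp (-(t ^ (1 / (1 - α)))))) := by
  intro t ht
  have hg : ∀ u, 0 < u → 0 < 1 / (-ψ u) := fun u hu =>
    one_div_pos.2 (neg_pos.2 (hψ_neg u hu))
  have hΦeq : EqOn (fun w => ∫ u in Ioo 0 w, 1 / (-ψ u)) Φ (Ioi 0) :=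
    fun w hw => (hΦ w hw).symm
  have hrv : RegularlyVaryingAtZero Φ (1 - α) := by
    have := (RegularlyVaryingAtZero.neg hψ_rv).one_div.setIntegral_Ioo_zero hg hint
    rw [neg_add_eq_sub] at this
    exact this.congr hΦeq
  have hmono : MonotoneOn Φ (Ioo 0 1) := fun x hx y hy hxy => by
    rw [hΦ x hx.1, hΦ y hy.1]
    exact setIntegral_Ioo_zero_mono (fun u hu => (hg u hu).le) hxy
      (hint.mono_set (Ioo_subset_Ioo_right hy.2.le))
  have hΦ0 : Tendsto Φ (𝓝[>] 0) (𝓝[>] 0) :=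
    (tendsto_setIntegral_Ioo_zero_nhdsGT hg hint).congr' (eventuallyEq_nhdsWithin_of_eqOn hΦeq)
  have hv' : ∀ᶠ s in 𝓝[>] 0, v s ∈ Ioo 0 1 ∧ Φ (v s) = s := by
    filter_upwards [hv, Ioo_mem_nhdsGT (setIntegral_Ioo_zero_pos hg one_pos hint)]
      with s ⟨hvs, hΦvs⟩ hs
    have hs' : ∫ u in Ioo 0 (v s), 1 / (-ψ u) = s := (hΦ _ hvs).symm.trans hΦvs
    refine ⟨⟨hvs, lt_of_setIntegral_Ioo_zero_lt (fun u hu => (hg u hu).le) ?_ ?_⟩, hΦvs⟩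
    · exact hs'.symm ▸ hs.1
    · exact hs'.symm ▸ hs.2
  have hlim := hrv.tendsto_inverse_const_mul_div (by linarith [hα.2]) one_pos hmono hΦ0 hv' ht
  have h1 : Tendsto (fun x => x * v (t * Φ (1 / x))) atTop (𝓝 (t ^ (1 / (1 - α)))) :=
    (hlim.comp tendsto_inv_atTop_nhdsGT_zero).congr fun x => by
      simp only [Function.comp_apply, one_div, div_inv_eq_mul, mul_comm]
  exact ⟨h1, (Real.continuous_exp.tendsto _).comp h1.neg⟩

/-- Let `α ∈ (0,1)`, `ψ : (0,∞) → (-∞,0)` continuous with `-ψ` regularly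
varying at `0` with index `α` and `∫_0^1 du/(-ψ(u)) < ∞`. With `Φ(w) := ∫_0^w du/(-ψ(u))`,
`v` the inverse of `Φ` on a right neighbourhood of `0`, and `φ(x) := Φ(1/x)`, one has for every
`t > 0`: `x · v(t·φ(x)) → t^{1/(1-α)}` and `exp(-x·v(t·φ(x))) → exp(-t^{1/(1-α)})` as `x → ∞`
(the Weibull limit of the renormalized explosion time of a CSBP). -/
theorem stmt_18 (α : ℝ) (hα : α ∈ Ioo (0 : ℝ) 1)
    (ψ : ℝ → ℝ) (hψ_cont : ContinuousOn ψ (Ioi 0))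
    (hψ_neg : ∀ s : ℝ, 0 < s → ψ s < 0)
    (hψ_rv : ∀ c : ℝ, 0 < c →
      Tendsto (fun s => ψ (c * s) / ψ s) (𝓝[>] 0) (𝓝 (c ^ α)))
    (hint : IntegrableOn (fun u => 1 / (-ψ u)) (Ioo 0 1))
    (Φ : ℝ → ℝ) (hΦ : ∀ w : ℝ, 0 < w → Φ w = ∫ u in Ioo 0 w, 1 / (-ψ u))
    (v : ℝ → ℝ) (hv : ∀ᶠ w in 𝓝[>] (0 : ℝ), 0 < v w ∧ Φ (v w) = w) :
    ∀ t : ℝ, 0 < t →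
      Tendsto (fun x => x * v (t * Φ (1 / x))) atTop (𝓝 (t ^ (1 / (1 - α)))) ∧
      Tendsto (fun x => Real.exp (-(x * v (t * Φ (1 / x))))) atTop
        (𝓝 (Real.exp (-(t ^ (1 / (1 - α)))))) :=
  stmt_18_general α hα ψ hψ_neg hψ_rv hint Φ hΦ v hv
end
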